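/- arXiv:1609.07837 — 4 statements merged into one kernel-verified Lean document; each statement's English description precedes it below -/
import Mathlib

section
/- Let λ > 0, d₁ > 0, and let p(u) = 1 − u/d₁ for 0 < u ≤ d₁ and p(u) = 0 for u > d₁ be the linear LoS probability function. Then for all r and r₂ with 0 < r ≤ d₁ and r₂ ≥ d₁, one has exp(−∫₀^{r₂} p(u)·2πλu du) · exp(−∫₀^{r} (1 − p(u))·2πλu du) · (1 − p(r)) · 2πλr = exp(−πλd₁²/3 − 2πλr³/(3d₁)) · (r/d₁) · 2πλr. -/
/-!
On `(0, d₁]` the integrands are polynomials: `p u · c u = c u - (c/d₁) u²` and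
`(1 - p u) · c u = (c/d₁) u²`. Beyond `d₁` the LoS integrand vanishes, so the exclusion integral
up to `r₂ ≥ d₁` is the integral up to `d₁`, namely `c d₁²/2 - c d₁²/3 = c d₁²/6`; with `c = 2πλ`
this is `πλd₁²/3`, while the NLoS integral up to `r` is `c r³/(3d₁)`. Multiplying the two
exponentials then gives the closed form.
-/

open Real Set intervalIntegral
open scoped Interval

theorem integral_div_mul_const_mul_id (a c d : ℝ) :
    ∫ u in (0:ℝ)..a, u / d * (c * u) = c * a ^ 3 / (3 * d) := by
  have hpoly : (fun u : ℝ => u / d * (c * u)) = fun u => c / d * u ^ 2 := by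
    ext u; ring
  rw [hpoly, integral_const_mul, integral_pow]
  ring

theorem integral_one_sub_div_mul_const_mul_id (a c d : ℝ) :
    ∫ u in (0:ℝ)..a, (1 - u / d) * (c * u) = c * a ^ 2 / 2 - c * a ^ 3 / (3 * d) := by
  have hpoly : (fun u : ℝ => (1 - u / d) * (c * u)) = fun u => c * u - u / d * (c * u) := by
    ext u; ring
  rw [hpoly, integral_sub (Continuous.intervalIntegrable (by fun_prop) _ _)
    (Continuous.intervalIntegrable (by fun_prop) _ _), integral_const_mul, integral_id,
    integral_div_mul_const_mul_id]
  ring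

section LinearLoS

variable {d₁ : ℝ} {p : ℝ → ℝ} (hp_le : ∀ u : ℝ, 0 < u → u ≤ d₁ → p u = 1 - u / d₁)
include hp_le

theorem integral_one_sub_linearLoS_mul (c : ℝ) {r : ℝ} (hr0 : 0 ≤ r) (hrd : r ≤ d₁) :
    ∫ u in (0:ℝ)..r, (1 - p u) * (c * u) = c * r ^ 3 / (3 * d₁) := by
  rw [← integral_div_mul_const_mul_id]
  refine integral_congr_ae (Filter.Eventually.of_forall fun u hu => ?_)
  rw [uIoc_of_le hr0] at hu
  rw [hp_le u hu.1 (hu.2.trans hrd)]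
  ring

theorem integral_linearLoS_mul (hp_gt : ∀ u : ℝ, d₁ < u → p u = 0) (hd₁ : 0 < d₁)
    (c : ℝ) {r₂ : ℝ} (hr₂ : d₁ ≤ r₂) :
    ∫ u in (0:ℝ)..r₂, p u * (c * u) = c * d₁ ^ 2 / 6 := by
  have hIoc : ∀ u ∈ Ι 0 r₂, p u * (c * u) =
      indicator {u | u ≤ d₁} (fun u => (1 - u / d₁) * (c * u)) u := by
    intro u hu
    rw [uIoc_of_le (hd₁.le.trans hr₂)] at hu
    by_cases hu₁ : u ≤ d₁
    · rw [indicator_of_mem (show u ∈ {u | u ≤ d₁} from hu₁), hp_le u hu.1 hu₁]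
    · rw [indicator_of_notMem (show u ∉ {u | u ≤ d₁} from hu₁), hp_gt u (not_le.mp hu₁), zero_mul]
  rw [integral_congr_ae (Filter.Eventually.of_forall hIoc),
    integral_indicator ⟨hd₁.le, hr₂⟩, integral_one_sub_div_mul_const_mul_id]
  field_simp
  ring

end LinearLoS

theorem fR1NL_closed_form_second_regime_general
    (lam d₁ : ℝ)
    (p : ℝ → ℝ)
    (hp_le : ∀ u : ℝ, 0 < u → u ≤ d₁ → p u = 1 - u / d₁)
    (hp_gt : ∀ u : ℝ, d₁ < u → p u = 0)
    (r r₂ : ℝ) (hr0 : 0 < r) (hrd : r ≤ d₁) (hr₂d : d₁ ≤ r₂) :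
    Real.exp (-(∫ u in (0:ℝ)..r₂, p u * (2 * π * lam * u))) *
      Real.exp (-(∫ u in (0:ℝ)..r, (1 - p u) * (2 * π * lam * u))) *
      (1 - p r) * (2 * π * lam * r)
    = Real.exp (-(π * lam * d₁ ^ 2 / 3) - 2 * π * lam * r ^ 3 / (3 * d₁)) *
        (r / d₁) * (2 * π * lam * r) := by
  rw [integral_linearLoS_mul hp_le hp_gt (hr0.trans_le hrd) _ hr₂d,
    integral_one_sub_linearLoS_mul hp_le _ hr0.le hrd, hp_le r hr0 hrd, ← exp_add]
  ring_nf

/-- Closed form of the NLoS serving-distance density `f_{R,1}^{NL}` (regime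
`r₂ ≥ d₁`) in the 3GPP special case with linear LoS probability
`p u = 1 - u/d₁` for `0 < u ≤ d₁`, `p u = 0` for `u > d₁`. -/
theorem fR1NL_closed_form_second_regime
    (lam d₁ : ℝ) (hlam : 0 < lam) (hd₁ : 0 < d₁)
    (p : ℝ → ℝ)
    (hp_le : ∀ u : ℝ, 0 < u → u ≤ d₁ → p u = 1 - u / d₁)
    (hp_gt : ∀ u : ℝ, d₁ < u → p u = 0)
    (r r₂ : ℝ) (hr0 : 0 < r) (hrd : r ≤ d₁) (hr₂d : d₁ ≤ r₂) :
    Real.exp (-(∫ u in (0:ℝ)..r₂, p u * (2 * π * lam * u))) *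
      Real.exp (-(∫ u in (0:ℝ)..r, (1 - p u) * (2 * π * lam * u))) *
      (1 - p r) * (2 * π * lam * r)
    = Real.exp (-(π * lam * d₁ ^ 2 / 3) - 2 * π * lam * r ^ 3 / (3 * d₁)) *
        (r / d₁) * (2 * π * lam * r) :=
  fR1NL_closed_form_second_regime_general lam d₁ p hp_le hp_gt r r₂ hr0 hrd hr₂d
end

section
/- Let λ > 0, d₁ > 0, and let p(u) = 1 − u/d₁ for 0 < u ≤ d₁ and p(u) = 0 for u > d₁ be the linear LoS probability function. Then for all r and r₂ with r > d₁ and r₂ ≥ d₁, one has exp(−∫₀^{r₂} p(u)·2πλu du) · exp(−∫₀^{r} (1 − p(u))·2πλu du) · (1 − p(r)) · 2πλr = 2πλr · exp(−πλr²). In particular the LoS-exclusion factor exp(−πλd₁²/3) exactly cancels against the contribution +πλd₁²/3 in the NLoS void-probability exponent. -/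
open Real Set intervalIntegral

/-!
Below `d₁` the LoS probability is `1 - u/d₁` and beyond it vanishes, so the LoS mass
`∫₀^R p(u)·2πλu du` equals `πλd₁²/3` for every `R ≥ d₁`. The NLoS exponent is the full disc
mass `πλr²` minus that same LoS mass, so the two exponentials multiply to `exp(-πλr²)`,
while `1 - p(r) = 1`.
-/

def IsLinearLoSProb (d₁ : ℝ) (p : ℝ → ℝ) : Prop :=
  (∀ u : ℝ, 0 < u → u ≤ d₁ → p u = 1 - u / d₁) ∧ ∀ u : ℝ, d₁ < u → p u = 0

namespace IsLinearLoSProb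

variable {d₁ : ℝ} {p : ℝ → ℝ}

theorem eqOn_max_one_sub_div_Ioi (hp : IsLinearLoSProb d₁ p) (hd₁ : 0 < d₁) :
    EqOn p (fun u => max (1 - u / d₁) 0) (Ioi 0) := by
  intro u (hu : 0 < u)
  rcases le_or_gt u d₁ with hle | hgt
  · change p u = max _ _
    rw [hp.1 u hu hle, max_eq_left (by rwa [sub_nonneg, div_le_one hd₁])]
  · change p u = max _ _
    rw [hp.2 u hgt, max_eq_right (by rw [sub_nonpos, one_le_div hd₁]; exact hgt.le)]

theorem intervalIntegrable_mul_const_mul (hp : IsLinearLoSProb d₁ p) (hd₁ : 0 < d₁)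
    (c : ℝ) {R : ℝ} (hR : 0 ≤ R) :
    IntervalIntegrable (fun u => p u * (c * u)) MeasureTheory.volume 0 R := by
  have hcont : Continuous fun u : ℝ => max (1 - u / d₁) 0 * (c * u) := by fun_prop
  refine hcont.intervalIntegrable 0 R |>.congr_uIoo fun u hu => ?_
  rw [uIoo_of_le hR] at hu
  simp only [hp.eqOn_max_one_sub_div_Ioi hd₁ hu.1]

theorem integral_mul_const_mul (hp : IsLinearLoSProb d₁ p) (hd₁ : 0 < d₁)
    (c : ℝ) {R : ℝ} (hR : d₁ ≤ R) :
    ∫ u in (0:ℝ)..R, p u * (c * u) = c * d₁ ^ 2 / 6 := by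
  have hint {b : ℝ} (hb : 0 ≤ b) :=
    hp.intervalIntegrable_mul_const_mul hd₁ c hb
  have h_below : ∫ u in (0:ℝ)..d₁, p u * (c * u) = c * d₁ ^ 2 / 6 := by
    calc ∫ u in (0:ℝ)..d₁, p u * (c * u)
        = ∫ u in (0:ℝ)..d₁, (c * u - c / d₁ * u ^ 2) :=
          integral_congr_Ioo_of_le hd₁.le fun u hu => by
            simp only [hp.1 u hu.1 hu.2.le]
            field_simp
      _ = c * d₁ ^ 2 / 6 := by
          rw [integral_sub (intervalIntegrable_id.const_mul c)
            ((intervalIntegrable_pow 2).const_mul _), integral_const_mul, integral_const_mul,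
            integral_id, integral_pow]
          field_simp
          ring
  have h_above : ∫ u in d₁..R, p u * (c * u) = 0 := by
    rw [integral_congr_Ioo_of_le (g := fun _ => 0) hR fun u hu => by
      simp only [hp.2 u hu.1, zero_mul]]
    exact integral_zero
  have hint_above : IntervalIntegrable (fun u => p u * (c * u)) MeasureTheory.volume d₁ R :=
    (hint (hd₁.le.trans hR)).mono_set (uIcc_subset_uIcc_right (mem_uIcc_of_le hd₁.le hR))
  rw [← integral_add_adjacent_intervals (hint hd₁.le) hint_above, h_below, h_above, add_zero]

theorem integral_one_sub_mul_const_mul (hp : IsLinearLoSProb d₁ p) (hd₁ : 0 < d₁)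
    (c : ℝ) {R : ℝ} (hR : d₁ ≤ R) :
    ∫ u in (0:ℝ)..R, (1 - p u) * (c * u) = c * (R ^ 2 / 2 - d₁ ^ 2 / 6) := by
  simp only [sub_mul, one_mul]
  rw [integral_sub (intervalIntegrable_id.const_mul c)
      (hp.intervalIntegrable_mul_const_mul hd₁ c (hd₁.le.trans hR)),
    hp.integral_mul_const_mul hd₁ c hR, integral_const_mul, integral_id]
  ring

end IsLinearLoSProb

theorem fR2NL_closed_form_general
    (lam d₁ : ℝ) (hd₁ : 0 < d₁)
    (p : ℝ → ℝ)
    (hp_le : ∀ u : ℝ, 0 < u → u ≤ d₁ → p u = 1 - u / d₁)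
    (hp_gt : ∀ u : ℝ, d₁ < u → p u = 0)
    (r r₂ : ℝ) (hr : d₁ < r) (hr₂ : d₁ ≤ r₂) :
    Real.exp (-(∫ u in (0:ℝ)..r₂, p u * (2 * π * lam * u))) *
      Real.exp (-(∫ u in (0:ℝ)..r, (1 - p u) * (2 * π * lam * u))) *
      (1 - p r) * (2 * π * lam * r)
    = 2 * π * lam * r * Real.exp (-(π * lam * r ^ 2)) := by
  have hp : IsLinearLoSProb d₁ p := ⟨hp_le, hp_gt⟩
  rw [hp.integral_mul_const_mul hd₁ _ hr₂, hp.integral_one_sub_mul_const_mul hd₁ _ hr.le,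
    hp_gt r hr, ← Real.exp_add]
  ring_nf

/-- For serving NLoS distances `r > d₁` (so that the equal-path-loss LoS distance
`r₂` satisfies `r₂ ≥ d₁`), the density `f_{R,2}^{NL}` simplifies to the Rayleigh-type
density `2πλr · exp (−πλr²)`: the LoS-exclusion factor `exp (−πλd₁²/3)` cancels
against the `+πλd₁²/3` contribution in the NLoS void-probability exponent. -/
theorem fR2NL_closed_form
    (lam d₁ : ℝ) (hlam : 0 < lam) (hd₁ : 0 < d₁)
    (p : ℝ → ℝ)
    (hp_le : ∀ u : ℝ, 0 < u → u ≤ d₁ → p u = 1 - u / d₁)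
    (hp_gt : ∀ u : ℝ, d₁ < u → p u = 0)
    (r r₂ : ℝ) (hr : d₁ < r) (hr₂ : d₁ ≤ r₂) :
    Real.exp (-(∫ u in (0:ℝ)..r₂, p u * (2 * π * lam * u))) *
      Real.exp (-(∫ u in (0:ℝ)..r, (1 - p u) * (2 * π * lam * u))) *
      (1 - p r) * (2 * π * lam * r)
    = 2 * π * lam * r * Real.exp (-(π * lam * r ^ 2)) :=
  fR2NL_closed_form_general lam d₁ hd₁ p hp_le hp_gt r r₂ hr hr₂
end

section
/- Let λ > 0, let p : (0,∞) → [0,1] be continuous, and let φ : (0,∞) → (0,∞) be a continuously differentiable, strictly increasing bijection of (0,∞) onto (0,∞) with inverse ψ. Define f^L(r) = exp(−∫₀^{φ(r)} (1 − p(u))·2πλu du) · exp(−∫₀^{r} p(u)·2πλu du) · p(r) · 2πλr and f^{NL}(r) = exp(−∫₀^{ψ(r)} p(u)·2πλu du) · exp(−∫₀^{r} (1 − p(u))·2πλu du) · (1 − p(r)) · 2πλr for r > 0. Then ∫₀^{∞} (f^L(r) + f^{NL}(r)) dr = 1. -/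
/-!
Let `G r` be the probability that no base station has smaller path loss than a LoS link of
length `r`, i.e. that there is no LoS station within distance `r` and no NLoS station within
distance `φ r`. Then `-G' r = f^L r + φ' r · f^{NL} (φ r)`, and `G` decreases from `1` at `0⁺`
to `0` at `∞`, since its exponent is at least `πλ min(r, φ r)²`. Integrating `-G'` over `(0, ∞)`
and substituting `x = φ r` in the NLoS term gives total mass `1`.
-/

open Real Set intervalIntegral MeasureTheory Filter Topology

section MonotoneSurjection

variable {α β : Type*} [LinearOrder α] [LinearOrder β] {f : α → β} {a : α} {b : β}

lemma MonotoneOn.tendsto_atTop_of_surjOn [NoMaxOrder β] (hf : MonotoneOn f (Ioi a))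
    (hsurj : SurjOn f (Ioi a) (Ioi b)) : Tendsto f atTop atTop := by
  refine tendsto_atTop.2 fun c => ?_
  obtain ⟨y, hy⟩ := exists_gt (max b c)
  obtain ⟨x₀, hx₀, rfl⟩ := hsurj ((le_max_left b c).trans_lt hy)
  filter_upwards [eventually_ge_atTop x₀] with x hx
  exact (le_max_right b c).trans (hy.le.trans (hf hx₀ (hx₀.trans_le hx) hx))

lemma MonotoneOn.tendsto_nhdsGT_of_surjOn [TopologicalSpace α] [OrderTopology α]
    [TopologicalSpace β] [OrderTopology β] [DenselyOrdered β] (hf : MonotoneOn f (Ioi a))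
    (hmaps : MapsTo f (Ioi a) (Ioi b)) (hsurj : SurjOn f (Ioi a) (Ioi b)) :
    Tendsto f (𝓝[>] a) (𝓝[>] b) := by
  refine tendsto_nhdsWithin_iff.2 ⟨tendsto_order.2 ⟨fun c hc => ?_, fun c hc => ?_⟩, ?_⟩
  · filter_upwards [self_mem_nhdsWithin] with x hx using hc.trans (hmaps hx)
  · obtain ⟨y, hby, hyc⟩ := exists_between hc
    obtain ⟨x₀, hx₀, rfl⟩ := hsurj hby
    filter_upwards [Ioo_mem_nhdsGT hx₀] with x hx
    exact (hf hx.1 hx₀ hx.2.le).trans_lt hyc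
  · filter_upwards [self_mem_nhdsWithin] with x hx using hmaps hx

end MonotoneSurjection

lemma MonotoneOn.deriv_nonneg {f : ℝ → ℝ} {s : Set ℝ} {x : ℝ} (hf : MonotoneOn f s)
    (hs : IsOpen s) (hx : x ∈ s) : 0 ≤ deriv f x := by
  rw [← derivWithin_of_isOpen hs hx]
  exact hf.derivWithin_nonneg

lemma integrableOn_Ioi_and_integral_eq_of_hasDerivAt_neg {g f : ℝ → ℝ} {a l m : ℝ}
    (hga : Tendsto g (𝓝[>] a) (𝓝 l)) (hderiv : ∀ x ∈ Ioi a, HasDerivAt g (-f x) x)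
    (hf : ∀ x ∈ Ioi a, 0 ≤ f x) (hgm : Tendsto g atTop (𝓝 m)) :
    IntegrableOn f (Ioi a) ∧ ∫ x in Ioi a, f x = l - m := by
  classical
  -- `g` need not be continuous at `a`, so integrate the antiderivative `-(update g a l)`
  set G : ℝ → ℝ := fun x => -Function.update g a l x
  have hG : ∀ x ∈ Ioi a, G =ᶠ[𝓝 x] fun y => -g y := fun x hx =>
    (eventually_ne_nhds (ne_of_gt hx)).mono fun y hy => by simp [G, Function.update_of_ne hy]
  have hcont : ContinuousWithinAt G (Ici a) a :=
    (continuousWithinAt_update_same.2 (by rwa [Ici_sdiff_left])).neg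
  have hGderiv : ∀ x ∈ Ioi a, HasDerivAt G (f x) x := fun x hx => by
    simpa using (hderiv x hx).neg.congr_of_eventuallyEq (hG x hx)
  have hGm : Tendsto G atTop (𝓝 (-m)) :=
    hgm.neg.congr' ((eventually_gt_atTop a).mono fun x hx => ((hG x hx).eq_of_nhds).symm)
  refine ⟨integrableOn_Ioi_deriv_of_nonneg hcont hGderiv hf hGm, ?_⟩
  rw [integral_Ioi_of_hasDerivAt_of_nonneg hcont hGderiv hf hGm]
  simp [G]
  ring

/-- Mean number of points within distance `r` of the origin of a planar Poisson process of
density `lam` thinned with retention probability `q` (a function of the distance). -/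
noncomputable def thinnedIntensity (lam : ℝ) (q : ℝ → ℝ) (r : ℝ) : ℝ :=
  ∫ u in (0:ℝ)..r, q u * (2 * π * lam * u)

section ThinnedIntensity

variable {lam : ℝ} {q : ℝ → ℝ}

lemma thinnedIntensity_integrand_mem_Icc (hlam : 0 ≤ lam)
    (hq01 : ∀ u ∈ Ioi (0 : ℝ), q u ∈ Icc (0 : ℝ) 1) {u : ℝ} (hu : 0 ≤ u) :
    q u * (2 * π * lam * u) ∈ Icc 0 (2 * π * lam * u) := by
  rcases hu.eq_or_lt with rfl | hu
  · simp
  · have hc : 0 ≤ 2 * π * lam * u := by positivity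
    exact ⟨mul_nonneg (hq01 u hu).1 hc, mul_le_of_le_one_left hc (hq01 u hu).2⟩

lemma intervalIntegrable_thinnedIntensity_integrand (hlam : 0 ≤ lam)
    (hq : ContinuousOn q (Ioi 0)) (hq01 : ∀ u ∈ Ioi (0 : ℝ), q u ∈ Icc (0 : ℝ) 1)
    {b : ℝ} (hb : 0 ≤ b) :
    IntervalIntegrable (fun u => q u * (2 * π * lam * u)) volume 0 b := by
  have hcont : ContinuousOn (fun u => q u * (2 * π * lam * u)) (Ioc 0 b) :=
    (hq.mono Ioc_subset_Ioi_self).mul (by fun_prop)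
  refine ((by fun_prop : Continuous fun u : ℝ => 2 * π * lam * u).intervalIntegrable 0 b).mono_fun
    ?_ ?_
  · rw [uIoc_of_le hb]
    exact hcont.aestronglyMeasurable measurableSet_Ioc
  · rw [uIoc_of_le hb]
    refine ae_restrict_of_forall_mem measurableSet_Ioc fun u hu => ?_
    have h := thinnedIntensity_integrand_mem_Icc hlam hq01 hu.1.le
    simpa only [norm_eq_abs] using abs_le_abs_of_nonneg h.1 h.2

lemma monotoneOn_thinnedIntensity (hlam : 0 ≤ lam) (hq : ContinuousOn q (Ioi 0))
    (hq01 : ∀ u ∈ Ioi (0 : ℝ), q u ∈ Icc (0 : ℝ) 1) :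
    MonotoneOn (thinnedIntensity lam q) (Ici 0) := fun _ ha _ _ hab =>
  intervalIntegral.integral_mono_interval le_rfl ha hab
    (ae_restrict_of_forall_mem measurableSet_Ioc fun _ hu =>
      (thinnedIntensity_integrand_mem_Icc hlam hq01 hu.1.le).1)
    (intervalIntegrable_thinnedIntensity_integrand hlam hq hq01 (ha.trans hab))

lemma hasDerivAt_thinnedIntensity (hlam : 0 ≤ lam) (hq : ContinuousOn q (Ioi 0))
    (hq01 : ∀ u ∈ Ioi (0 : ℝ), q u ∈ Icc (0 : ℝ) 1) {r : ℝ} (hr : 0 < r) :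
    HasDerivAt (thinnedIntensity lam q) (q r * (2 * π * lam * r)) r := by
  have hcont : ContinuousOn (fun u => q u * (2 * π * lam * u)) (Ioi 0) := hq.mul (by fun_prop)
  exact integral_hasDerivAt_right
    (intervalIntegrable_thinnedIntensity_integrand hlam hq hq01 hr.le)
    (hcont.stronglyMeasurableAtFilter isOpen_Ioi r hr) (hcont.continuousAt (Ioi_mem_nhds hr))

lemma continuousOn_thinnedIntensity (hlam : 0 ≤ lam) (hq : ContinuousOn q (Ioi 0))
    (hq01 : ∀ u ∈ Ioi (0 : ℝ), q u ∈ Icc (0 : ℝ) 1) :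
    ContinuousOn (thinnedIntensity lam q) (Ioi 0) := fun _ hr =>
  (hasDerivAt_thinnedIntensity hlam hq hq01 hr).continuousAt.continuousWithinAt

lemma tendsto_thinnedIntensity_nhdsGT_zero (hlam : 0 ≤ lam) (hq : ContinuousOn q (Ioi 0))
    (hq01 : ∀ u ∈ Ioi (0 : ℝ), q u ∈ Icc (0 : ℝ) 1) :
    Tendsto (thinnedIntensity lam q) (𝓝[>] 0) (𝓝 0) := by
  have hcont := continuousOn_primitive_interval'
    (intervalIntegrable_thinnedIntensity_integrand hlam hq hq01 zero_le_one) left_mem_uIcc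
  rw [uIcc_of_le zero_le_one] at hcont
  have h := hcont 0 (left_mem_Icc.2 zero_le_one)
  rw [ContinuousWithinAt, integral_same] at h
  exact h.mono_left (nhdsWithin_le_of_mem (Icc_mem_nhdsGT zero_lt_one))

lemma thinnedIntensity_add_one_sub (hlam : 0 ≤ lam) (hq : ContinuousOn q (Ioi 0))
    (hq01 : ∀ u ∈ Ioi (0 : ℝ), q u ∈ Icc (0 : ℝ) 1) {r : ℝ} (hr : 0 ≤ r) :
    thinnedIntensity lam q r + thinnedIntensity lam (fun u => 1 - q u) r = π * lam * r ^ 2 := by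
  have hq' : ContinuousOn (fun u => 1 - q u) (Ioi 0) := continuousOn_const.sub hq
  have hq01' : ∀ u ∈ Ioi (0 : ℝ), 1 - q u ∈ Icc (0 : ℝ) 1 := fun u hu =>
    Icc.one_sub_mem (hq01 u hu)
  rw [thinnedIntensity, thinnedIntensity, ← integral_add
    (intervalIntegrable_thinnedIntensity_integrand hlam hq hq01 hr)
    (intervalIntegrable_thinnedIntensity_integrand hlam hq' hq01' hr)]
  simp only [← add_mul, add_sub_cancel, one_mul]
  rw [intervalIntegral.integral_const_mul, integral_id]
  ring

lemma le_thinnedIntensity_add_one_sub (hlam : 0 ≤ lam) (hq : ContinuousOn q (Ioi 0))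
    (hq01 : ∀ u ∈ Ioi (0 : ℝ), q u ∈ Icc (0 : ℝ) 1)
    {a b : ℝ} (ha : 0 ≤ a) (hb : 0 ≤ b) :
    π * lam * min a b ^ 2 ≤
      thinnedIntensity lam q a + thinnedIntensity lam (fun u => 1 - q u) b := by
  have hm : 0 ≤ min a b := le_min ha hb
  rw [← thinnedIntensity_add_one_sub hlam hq hq01 hm]
  exact add_le_add (monotoneOn_thinnedIntensity hlam hq hq01 hm ha (min_le_left a b))
    (monotoneOn_thinnedIntensity (q := fun u => 1 - q u) hlam (continuousOn_const.sub hq)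
      (fun u hu => Icc.one_sub_mem (hq01 u hu)) hm hb (min_le_right a b))

end ThinnedIntensity

/-- Probability that no base station has smaller path loss than a LoS link of length `r`:
no LoS station within distance `r` and no NLoS station within distance `φ r`. -/
noncomputable def voidProb (lam : ℝ) (p φ : ℝ → ℝ) (r : ℝ) : ℝ :=
  exp (-(thinnedIntensity lam p r + thinnedIntensity lam (fun u => 1 - p u) (φ r)))

noncomputable def losDensity (lam : ℝ) (p φ : ℝ → ℝ) (r : ℝ) : ℝ :=
  exp (-thinnedIntensity lam (fun u => 1 - p u) (φ r)) * exp (-thinnedIntensity lam p r) *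
    p r * (2 * π * lam * r)

noncomputable def nlosDensity (lam : ℝ) (p ψ : ℝ → ℝ) (x : ℝ) : ℝ :=
  exp (-thinnedIntensity lam p (ψ x)) * exp (-thinnedIntensity lam (fun u => 1 - p u) x) *
    (1 - p x) * (2 * π * lam * x)

section ServingDistance

variable {lam : ℝ} {p φ ψ : ℝ → ℝ}

lemma losDensity_nonneg (hlam : 0 ≤ lam) (hp01 : ∀ u ∈ Ioi (0 : ℝ), p u ∈ Icc (0 : ℝ) 1)
    {r : ℝ} (hr : 0 < r) : 0 ≤ losDensity lam p φ r :=
  mul_nonneg (mul_nonneg (by positivity) (hp01 r hr).1) (by positivity)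

lemma nlosDensity_nonneg (hlam : 0 ≤ lam) (hp01 : ∀ u ∈ Ioi (0 : ℝ), p u ∈ Icc (0 : ℝ) 1)
    {x : ℝ} (hx : 0 < x) : 0 ≤ nlosDensity lam p ψ x :=
  mul_nonneg (mul_nonneg (by positivity) (sub_nonneg.2 (hp01 x hx).2)) (by positivity)

lemma continuousOn_losDensity (hlam : 0 ≤ lam) (hp : ContinuousOn p (Ioi 0))
    (hp01 : ∀ u ∈ Ioi (0 : ℝ), p u ∈ Icc (0 : ℝ) 1) (hφ : ContinuousOn φ (Ioi 0))
    (hmaps : MapsTo φ (Ioi 0) (Ioi 0)) : ContinuousOn (losDensity lam p φ) (Ioi 0) := by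
  have hK := continuousOn_thinnedIntensity hlam hp hp01
  have hK' := continuousOn_thinnedIntensity (q := fun u => 1 - p u) hlam
    (continuousOn_const.sub hp) fun u hu => Icc.one_sub_mem (hp01 u hu)
  exact ((((hK'.comp hφ hmaps).neg.rexp).mul hK.neg.rexp).mul hp).mul (by fun_prop)

lemma hasDerivAt_voidProb (hlam : 0 ≤ lam) (hp : ContinuousOn p (Ioi 0))
    (hp01 : ∀ u ∈ Ioi (0 : ℝ), p u ∈ Icc (0 : ℝ) 1) {r φ' : ℝ} (hr : 0 < r)
    (hφ : HasDerivAt φ φ' r) (hφr : 0 < φ r) (hψφ : ψ (φ r) = r) :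
    HasDerivAt (voidProb lam p φ)
      (-(losDensity lam p φ r + φ' * nlosDensity lam p ψ (φ r))) r := by
  have hK := hasDerivAt_thinnedIntensity hlam hp hp01 hr
  have hK' := hasDerivAt_thinnedIntensity (q := fun u => 1 - p u) hlam
    (continuousOn_const.sub hp) (fun u hu => Icc.one_sub_mem (hp01 u hu)) hφr
  refine (hK.add (hK'.comp r hφ)).neg.exp.congr_deriv ?_
  simp only [Pi.neg_apply, Pi.add_apply, Function.comp_apply, losDensity, nlosDensity, hψφ,
    neg_add, exp_add]
  ring

lemma tendsto_voidProb_nhdsGT_zero (hlam : 0 ≤ lam) (hp : ContinuousOn p (Ioi 0))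
    (hp01 : ∀ u ∈ Ioi (0 : ℝ), p u ∈ Icc (0 : ℝ) 1) (hφ : Tendsto φ (𝓝[>] 0) (𝓝[>] 0)) :
    Tendsto (voidProb lam p φ) (𝓝[>] 0) (𝓝 1) := by
  have hK := tendsto_thinnedIntensity_nhdsGT_zero hlam hp hp01
  have hK' := tendsto_thinnedIntensity_nhdsGT_zero (q := fun u => 1 - p u) hlam
    (continuousOn_const.sub hp) fun u hu => Icc.one_sub_mem (hp01 u hu)
  rw [show (1 : ℝ) = exp (-(0 + 0)) by simp]
  exact (hK.add (hK'.comp hφ)).neg.rexp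

lemma tendsto_voidProb_atTop (hlam : 0 < lam) (hp : ContinuousOn p (Ioi 0))
    (hp01 : ∀ u ∈ Ioi (0 : ℝ), p u ∈ Icc (0 : ℝ) 1) (hφ : Tendsto φ atTop atTop) :
    Tendsto (voidProb lam p φ) atTop (𝓝 0) := by
  have hmin : Tendsto (fun r => min r (φ r)) atTop atTop := tendsto_inf_atTop _ tendsto_id hφ
  have hquad : Tendsto (fun r => π * lam * min r (φ r) ^ 2) atTop atTop :=
    ((tendsto_pow_atTop two_ne_zero).comp hmin).const_mul_atTop (by positivity)
  have hexponent : Tendsto (fun r => thinnedIntensity lam p r +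
      thinnedIntensity lam (fun u => 1 - p u) (φ r)) atTop atTop := by
    refine tendsto_atTop_mono' _ ?_ hquad
    filter_upwards [eventually_ge_atTop 0, hφ.eventually_ge_atTop 0] with r hr hφr
    exact le_thinnedIntensity_add_one_sub hlam.le hp hp01 hr hφr
  exact tendsto_exp_atBot.comp (tendsto_neg_atTop_atBot.comp hexponent)

lemma integrableOn_Ioi_and_integral_losDensity_add_eq_one (hlam : 0 < lam)
    (hp : ContinuousOn p (Ioi 0)) (hp01 : ∀ u ∈ Ioi (0 : ℝ), p u ∈ Icc (0 : ℝ) 1)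
    (hφ : DifferentiableOn ℝ φ (Ioi 0)) (hmono : MonotoneOn φ (Ioi 0))
    (hmaps : MapsTo φ (Ioi 0) (Ioi 0)) (hsurj : SurjOn φ (Ioi 0) (Ioi 0))
    (hψφ : ∀ r ∈ Ioi (0 : ℝ), ψ (φ r) = r) :
    IntegrableOn (fun r => losDensity lam p φ r + deriv φ r * nlosDensity lam p ψ (φ r)) (Ioi 0) ∧
      ∫ r in Ioi 0, (losDensity lam p φ r + deriv φ r * nlosDensity lam p ψ (φ r)) = 1 := by
  have h := integrableOn_Ioi_and_integral_eq_of_hasDerivAt_neg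
    (tendsto_voidProb_nhdsGT_zero hlam.le hp hp01 (hmono.tendsto_nhdsGT_of_surjOn hmaps hsurj))
    (fun r hr => hasDerivAt_voidProb hlam.le hp hp01 hr
      ((hφ r hr).differentiableAt (Ioi_mem_nhds hr)).hasDerivAt (hmaps hr) (hψφ r hr))
    (fun r hr => add_nonneg (losDensity_nonneg hlam.le hp01 hr)
      (mul_nonneg (hmono.deriv_nonneg isOpen_Ioi hr) (nlosDensity_nonneg hlam.le hp01 (hmaps hr))))
    (tendsto_voidProb_atTop hlam hp hp01 (hmono.tendsto_atTop_of_surjOn hsurj))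
  rwa [sub_zero] at h

end ServingDistance

theorem serving_distance_density_integrates_to_one_general
    (lam : ℝ) (hlam : 0 < lam)
    (p : ℝ → ℝ) (hp : ContinuousOn p (Set.Ioi 0))
    (hp01 : ∀ u ∈ Set.Ioi (0 : ℝ), p u ∈ Set.Icc (0 : ℝ) 1)
    (φ ψ : ℝ → ℝ)
    (hφC1 : ContDiffOn ℝ 1 φ (Set.Ioi 0))
    (hφmono : StrictMonoOn φ (Set.Ioi 0))
    (hφbij : Set.BijOn φ (Set.Ioi 0) (Set.Ioi 0))
    (hψφ : ∀ r ∈ Set.Ioi (0 : ℝ), ψ (φ r) = r) :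
    (∫ r in Set.Ioi (0 : ℝ),
        (Real.exp (-(∫ u in (0:ℝ)..(φ r), (1 - p u) * (2 * π * lam * u))) *
            Real.exp (-(∫ u in (0:ℝ)..r, p u * (2 * π * lam * u))) *
            p r * (2 * π * lam * r) +
          Real.exp (-(∫ u in (0:ℝ)..(ψ r), p u * (2 * π * lam * u))) *
            Real.exp (-(∫ u in (0:ℝ)..r, (1 - p u) * (2 * π * lam * u))) *
            (1 - p r) * (2 * π * lam * r))) = 1 := by
  have hφ : DifferentiableOn ℝ φ (Ioi 0) := hφC1.differentiableOn one_ne_zero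
  have hφ' : ∀ r ∈ Ioi (0 : ℝ), HasDerivWithinAt φ (deriv φ r) (Ioi 0) r := fun r hr =>
    ((hφ r hr).differentiableAt (Ioi_mem_nhds hr)).hasDerivAt.hasDerivWithinAt
  obtain ⟨hint, hmass⟩ := integrableOn_Ioi_and_integral_losDensity_add_eq_one hlam hp hp01 hφ
    hφmono.monotoneOn hφbij.mapsTo hφbij.surjOn hψφ
  obtain ⟨hLint, hNLint'⟩ := (integrable_add_iff_of_nonneg
    ((continuousOn_losDensity hlam.le hp hp01 hφC1.continuousOn hφbij.mapsTo).aestronglyMeasurable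
      measurableSet_Ioi)
    (ae_restrict_of_forall_mem measurableSet_Ioi fun r hr => losDensity_nonneg hlam.le hp01 hr)
    (ae_restrict_of_forall_mem measurableSet_Ioi fun r hr =>
      mul_nonneg (hφmono.monotoneOn.deriv_nonneg isOpen_Ioi hr)
        (nlosDensity_nonneg hlam.le hp01 (hφbij.mapsTo hr)))).1 hint
  have hNLint : IntegrableOn (nlosDensity lam p ψ) (Ioi 0) := by
    have h := integrableOn_image_iff_integrableOn_deriv_smul_of_monotoneOn measurableSet_Ioi hφ'
      hφmono.monotoneOn (nlosDensity lam p ψ)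
    rw [hφbij.image_eq] at h
    exact h.2 hNLint'
  have hsubst : ∫ x in Ioi 0, nlosDensity lam p ψ x =
      ∫ r in Ioi 0, deriv φ r * nlosDensity lam p ψ (φ r) := by
    simpa only [hφbij.image_eq, smul_eq_mul] using
      integral_image_eq_integral_deriv_smul_of_monotoneOn measurableSet_Ioi hφ' hφmono.monotoneOn
        (nlosDensity lam p ψ)
  change ∫ r in Ioi 0, (losDensity lam p φ r + nlosDensity lam p ψ r) = 1
  rw [integral_add hLint hNLint, hsubst, ← integral_add hLint hNLint', hmass]

/-- Under smallest-path-loss association, the LoS and NLoS serving-distance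
densities `f^L` and `f^{NL}` together form a probability density:
`∫₀^∞ (f^L r + f^{NL} r) dr = 1`. Here `p` is the LoS probability function,
`φ` is the equal-path-loss LoS→NLoS distance conversion (a `C¹`, strictly
increasing bijection of `(0,∞)` onto itself) and `ψ` is its inverse. -/
theorem serving_distance_density_integrates_to_one
    (lam : ℝ) (hlam : 0 < lam)
    (p : ℝ → ℝ) (hp : ContinuousOn p (Set.Ioi 0))
    (hp01 : ∀ u ∈ Set.Ioi (0 : ℝ), p u ∈ Set.Icc (0 : ℝ) 1)
    (φ ψ : ℝ → ℝ)
    (hφC1 : ContDiffOn ℝ 1 φ (Set.Ioi 0))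
    (hφmono : StrictMonoOn φ (Set.Ioi 0))
    (hφbij : Set.BijOn φ (Set.Ioi 0) (Set.Ioi 0))
    (hψφ : ∀ r ∈ Set.Ioi (0 : ℝ), ψ (φ r) = r)
    (hφψ : ∀ x ∈ Set.Ioi (0 : ℝ), φ (ψ x) = x) :
    (∫ r in Set.Ioi (0 : ℝ),
        (Real.exp (-(∫ u in (0:ℝ)..(φ r), (1 - p u) * (2 * π * lam * u))) *
            Real.exp (-(∫ u in (0:ℝ)..r, p u * (2 * π * lam * u))) *
            p r * (2 * π * lam * r) +
          Real.exp (-(∫ u in (0:ℝ)..(ψ r), p u * (2 * π * lam * u))) *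
            Real.exp (-(∫ u in (0:ℝ)..r, (1 - p u) * (2 * π * lam * u))) *
            (1 - p r) * (2 * π * lam * r))) = 1 :=
  serving_distance_density_integrates_to_one_general lam hlam p hp hp01 φ ψ hφC1 hφmono hφbij hψφ
end

section
/- Let λ > 0, d₁ > 0, A_L, A_NL, α_L, α_NL > 0 with A_L·d₁^{α_L} ≤ A_NL·d₁^{α_NL}, and let p(u) = 1 − u/d₁ for 0 < u ≤ d₁ and p(u) = 0 for u > d₁. Set r₁(r) = (A_L·r^{α_L}/A_NL)^{1/α_NL}, r₂(r) = (A_NL·r^{α_NL}/A_L)^{1/α_L}, and y₁ = (A_L·d₁^{α_L}/A_NL)^{1/α_NL} (so y₁ ≤ d₁). Then ∫₀^{d₁} exp(−πλr² + 2πλ(r³/(3d₁) − r₁(r)³/(3d₁)))·(1 − r/d₁)·2πλr dr + ∫₀^{y₁} exp(−πλr₂(r)² + 2πλ(r₂(r)³/(3d₁) − r³/(3d₁)))·(r/d₁)·2πλr dr + ∫_{y₁}^{d₁} exp(−πλd₁²/3 − 2πλr³/(3d₁))·(r/d₁)·2πλr dr + ∫_{d₁}^{∞} 2πλr·e^{−πλr²}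 dr = 1. -/
/-!
Write `E(x) = -πλx² + 2πλ(x³ - r₁(x)³)/(3d₁)`. On `[0, ∞)` the conversion `r₁` is an increasing
power function with left inverse `r₂`, so the substitution `u = r₁(x)` turns the second integral
into one over `[0, d₁]`, and together with the first its integrand becomes `e^E · (-E')`. The two
pieces therefore telescope to `1 - e^{E(d₁)}`. The third piece is again the derivative of an
exponential and contributes `e^{E(d₁)} - e^{-πλd₁²}`, and the Gaussian tail gives `e^{-πλd₁²}`.
-/

open Real Set intervalIntegral MeasureTheory Filter Topology

theorem integral_exp_mul_neg_deriv {E E' : ℝ → ℝ} {a b : ℝ} (hE : ContinuousOn E (uIcc a b))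
    (hderiv : ∀ x ∈ Ioo (min a b) (max a b), HasDerivAt E (E' x) x)
    (hint : IntervalIntegrable E' volume a b) :
    ∫ x in a..b, exp (E x) * -E' x = exp (E a) - exp (E b) := by
  have hexp : ContinuousOn (fun x => exp (E x)) (uIcc a b) := continuous_exp.comp_continuousOn hE
  rw [integral_eq_sub_of_hasDeriv_right (f := fun x => -exp (E x))
    (f' := fun x => exp (E x) * -E' x) hexp.neg
    (fun x hx => by simpa only [mul_neg] using (hderiv x hx).exp.fun_neg.hasDerivWithinAt)
    (hint.neg.continuousOn_mul hexp)]
  ring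

theorem integral_Ioi_mul_exp_neg_mul_sq {a b : ℝ} (ha : 0 ≤ a) (hb : 0 < b) :
    ∫ x in Ioi a, 2 * b * x * exp (-(b * x ^ 2)) = exp (-(b * a ^ 2)) := by
  have hderiv : ∀ x ∈ Ici a, HasDerivAt (fun x => -exp (-(b * x ^ 2)))
      (2 * b * x * exp (-(b * x ^ 2))) x := fun x _ => by
    refine ((hasDerivAt_pow 2 x).const_mul b).fun_neg.exp.fun_neg.congr_deriv ?_
    push_cast
    ring
  have hlim : Tendsto (fun x => -exp (-(b * x ^ 2))) atTop (𝓝 (-0)) :=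
    (tendsto_exp_atBot.comp <| tendsto_neg_atTop_atBot.comp <|
      (tendsto_pow_atTop two_ne_zero).const_mul_atTop hb).neg
  rw [integral_Ioi_of_hasDerivAt_of_nonneg' hderiv
    (fun x hx => by have : 0 < x := ha.trans_lt hx; positivity) hlim]
  ring

theorem integral_exp_add_integral_exp_comp_of_leftInverse {P Q p q f f' g : ℝ → ℝ} {a b : ℝ}
    (hP : ∀ x, HasDerivAt P (p x) x) (hp : Continuous p)
    (hQ : ∀ u, HasDerivAt Q (q u) u) (hq : Continuous q)
    (hf : ContinuousOn f (uIcc a b))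
    (hff' : ∀ x ∈ Ioo (min a b) (max a b), HasDerivAt f (f' x) x)
    (hf' : ∀ x ∈ Ioo (min a b) (max a b), 0 ≤ f' x) (hgf : ∀ x ∈ uIcc a b, g (f x) = x) :
    (∫ x in a..b, exp (P x + Q (f x)) * -p x) + ∫ u in f a..f b, exp (P (g u) + Q u) * -q u
      = exp (P a + Q (f a)) - exp (P b + Q (f b)) := by
  have hsubst : ∫ u in f a..f b, exp (P (g u) + Q u) * -q u
      = ∫ x in a..b, exp (P x + Q (f x)) * -(q (f x) * f' x) := by
    rw [← integral_comp_mul_deriv_of_deriv_nonneg hf hff' hf']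
    refine integral_congr fun x hx => ?_
    simp only [Function.comp_apply, hgf x hx]
    ring
  have hE : ContinuousOn (fun x => P x + Q (f x)) (uIcc a b) :=
    (continuous_iff_continuousAt.2 fun x => (hP x).continuousAt).continuousOn.add
      ((continuous_iff_continuousAt.2 fun u => (hQ u).continuousAt).comp_continuousOn hf)
  have hexp : ContinuousOn (fun x => exp (P x + Q (f x))) (uIcc a b) :=
    continuous_exp.comp_continuousOn hE
  have hqf' : IntervalIntegrable (fun x => q (f x) * f' x) volume a b :=
    (intervalIntegrable_deriv_of_nonneg hf hff' hf').continuousOn_mul (hq.comp_continuousOn hf)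
  have hint₁ : IntervalIntegrable (fun x => exp (P x + Q (f x)) * -p x) volume a b :=
    (hp.neg.intervalIntegrable a b).continuousOn_mul hexp
  have hint₂ : IntervalIntegrable (fun x => exp (P x + Q (f x)) * -(q (f x) * f' x)) volume a b :=
    hqf'.neg.continuousOn_mul hexp
  rw [hsubst, ← integral_add hint₁ hint₂]
  refine (integral_congr fun x _ => ?_).trans <| integral_exp_mul_neg_deriv hE
    (fun x hx => (hP x).add ((hQ (f x)).comp x (hff' x hx))) ((hp.intervalIntegrable a b).add hqf')
  ring

theorem rpow_conversion_eq_mul_rpow {A B α γ r : ℝ} (hA : 0 ≤ A) (hB : 0 ≤ B) (hr : 0 ≤ r) :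
    (A * r ^ α / B) ^ (1 / γ) = (A / B) ^ (1 / γ) * r ^ (α / γ) := by
  rw [mul_div_right_comm, mul_rpow (div_nonneg hA hB) (rpow_nonneg hr α), ← rpow_mul hr,
    mul_one_div]

theorem rpow_conversion_leftInverse {A B α γ x : ℝ} (hA : 0 < A) (hB : 0 < B) (hα : α ≠ 0)
    (hγ : γ ≠ 0) (hx : 0 ≤ x) : (B * ((A * x ^ α / B) ^ (1 / γ)) ^ γ / A) ^ (1 / α) = x := by
  have hAx : 0 ≤ A * x ^ α / B := by positivity
  rw [one_div, rpow_inv_rpow hAx hγ, mul_div_cancel₀ _ hB.ne', mul_div_cancel_left₀ _ hA.ne',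
    one_div, rpow_rpow_inv hx hα]

theorem integral_los_add_integral_nlos {lam d₁ A_L A_NL α_L α_NL y₁ : ℝ} {r₁ r₂ : ℝ → ℝ}
    (hd₁ : 0 < d₁) (hAL : 0 < A_L) (hANL : 0 < A_NL) (haL : 0 < α_L) (haNL : 0 < α_NL)
    (hr₁ : ∀ r : ℝ, r₁ r = (A_L * r ^ α_L / A_NL) ^ (1 / α_NL))
    (hr₂ : ∀ r : ℝ, r₂ r = (A_NL * r ^ α_NL / A_L) ^ (1 / α_L))
    (hy₁ : y₁ = (A_L * d₁ ^ α_L / A_NL) ^ (1 / α_NL)) :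
    (∫ r in (0:ℝ)..d₁,
        exp (-(π * lam * r ^ 2) +
            2 * π * lam * (r ^ 3 / (3 * d₁) - (r₁ r) ^ 3 / (3 * d₁))) *
          (1 - r / d₁) * (2 * π * lam * r)) +
      (∫ r in (0:ℝ)..y₁,
        exp (-(π * lam * (r₂ r) ^ 2) +
            2 * π * lam * ((r₂ r) ^ 3 / (3 * d₁) - r ^ 3 / (3 * d₁))) *
          (r / d₁) * (2 * π * lam * r))
      = 1 - exp (-(π * lam * d₁ ^ 2 / 3) - 2 * π * lam * y₁ ^ 3 / (3 * d₁)) := by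
  set c := (A_L / A_NL) ^ (1 / α_NL)
  set β := α_L / α_NL
  have hβ : 0 < β := div_pos haL haNL
  have hr₁_pow : ∀ r, 0 ≤ r → r₁ r = c * r ^ β := fun r hr =>
    (hr₁ r).trans (rpow_conversion_eq_mul_rpow hAL.le hANL.le hr)
  have hpos : ∀ x ∈ Ioo (min 0 d₁) (max 0 d₁), 0 < x := fun x hx => by
    simpa [hd₁.le] using hx.1
  have hr₁_cont : ContinuousOn r₁ (uIcc 0 d₁) := by
    have : Continuous fun x : ℝ => c * x ^ β := continuous_const.mul (continuous_rpow_const hβ.le)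
    refine this.continuousOn.congr fun x hx => ?_
    rw [uIcc_of_le hd₁.le] at hx
    exact hr₁_pow x hx.1
  have hr₁_deriv : ∀ x ∈ Ioo (min 0 d₁) (max 0 d₁), HasDerivAt r₁ (c * (β * x ^ (β - 1))) x :=
    fun x hx =>
      ((hasDerivAt_rpow_const (Or.inl (hpos x hx).ne')).const_mul c).congr_of_eventuallyEq
        (eventually_of_mem (Ioi_mem_nhds (hpos x hx)) fun r hr => hr₁_pow r hr.le)
  have hr₁_deriv_nonneg : ∀ x ∈ Ioo (min 0 d₁) (max 0 d₁), 0 ≤ c * (β * x ^ (β - 1)) :=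
    fun x hx => have := hpos x hx; by positivity
  have hr₂_r₁ : ∀ x ∈ uIcc 0 d₁, r₂ (r₁ x) = x := fun x hx => by
    rw [uIcc_of_le hd₁.le] at hx
    rw [hr₂, hr₁]
    exact rpow_conversion_leftInverse hAL hANL haL.ne' haNL.ne' hx.1
  have key := integral_exp_add_integral_exp_comp_of_leftInverse
    (P := fun x => -(π * lam * x ^ 2) + 2 * π * lam * (x ^ 3 / (3 * d₁)))
    (Q := fun u => -(2 * π * lam * (u ^ 3 / (3 * d₁))))
    (p := fun x => -(2 * π * lam * x * (1 - x / d₁))) (q := fun u => -(2 * π * lam * u ^ 2 / d₁))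
    (fun x => (((hasDerivAt_pow 2 x).const_mul (π * lam)).fun_neg.add
      (((hasDerivAt_pow 3 x).div_const (3 * d₁)).const_mul (2 * π * lam))).congr_deriv
        (by field_simp; ring))
    (by fun_prop)
    (fun u => (((hasDerivAt_pow 3 u).div_const (3 * d₁)).const_mul (2 * π * lam)).fun_neg
      |>.congr_deriv (by field_simp; ring))
    (by fun_prop)
    hr₁_cont hr₁_deriv hr₁_deriv_nonneg hr₂_r₁
  rw [hr₁_pow 0 le_rfl, zero_rpow hβ.ne', mul_zero, hr₁, ← hy₁] at key
  convert key using 1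
  · congr 1 <;> refine integral_congr fun x _ => ?_ <;> ring_nf
  · congr 1
    · norm_num
    · congr 1
      field_simp
      ring

theorem integral_nlos_far {lam d₁ y₁ : ℝ} (hd₁ : d₁ ≠ 0) :
    (∫ r in y₁..d₁,
        exp (-(π * lam * d₁ ^ 2 / 3) - 2 * π * lam * r ^ 3 / (3 * d₁)) *
          (r / d₁) * (2 * π * lam * r))
      = exp (-(π * lam * d₁ ^ 2 / 3) - 2 * π * lam * y₁ ^ 3 / (3 * d₁))
        - exp (-(π * lam * d₁ ^ 2)) := by
  have hE : ∀ x, HasDerivAt (fun r => -(π * lam * d₁ ^ 2 / 3) - 2 * π * lam * r ^ 3 / (3 * d₁))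
      (-(2 * π * lam * x ^ 2 / d₁)) x := fun x =>
    (((hasDerivAt_pow 3 x).const_mul (2 * π * lam)).div_const (3 * d₁)).const_sub _ |>.congr_deriv
      (by field_simp; ring)
  have hFTC := integral_exp_mul_neg_deriv
    (continuous_iff_continuousAt.2 fun x => (hE x).continuousAt).continuousOn (fun x _ => hE x)
    ((by fun_prop : Continuous fun x : ℝ => -(2 * π * lam * x ^ 2 / d₁)).intervalIntegrable y₁ d₁)
  refine (integral_congr fun x _ => ?_).trans (hFTC.trans ?_)
  · ring
  · congr 2
    field_simp
    ring

theorem threeGPP_serving_distance_densities_sum_to_one_general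
    (lam d₁ A_L A_NL α_L α_NL : ℝ)
    (hlam : 0 < lam) (hd₁ : 0 < d₁)
    (hAL : 0 < A_L) (hANL : 0 < A_NL) (haL : 0 < α_L) (haNL : 0 < α_NL)
    (r₁ r₂ : ℝ → ℝ) (y₁ : ℝ)
    (hr₁ : ∀ r : ℝ, r₁ r = (A_L * r ^ α_L / A_NL) ^ (1 / α_NL))
    (hr₂ : ∀ r : ℝ, r₂ r = (A_NL * r ^ α_NL / A_L) ^ (1 / α_L))
    (hy₁ : y₁ = (A_L * d₁ ^ α_L / A_NL) ^ (1 / α_NL)) :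
    (∫ r in (0:ℝ)..d₁,
        Real.exp (-(π * lam * r ^ 2) +
            2 * π * lam * (r ^ 3 / (3 * d₁) - (r₁ r) ^ 3 / (3 * d₁))) *
          (1 - r / d₁) * (2 * π * lam * r)) +
      (∫ r in (0:ℝ)..y₁,
        Real.exp (-(π * lam * (r₂ r) ^ 2) +
            2 * π * lam * ((r₂ r) ^ 3 / (3 * d₁) - r ^ 3 / (3 * d₁))) *
          (r / d₁) * (2 * π * lam * r)) +
      (∫ r in y₁..d₁,
        Real.exp (-(π * lam * d₁ ^ 2 / 3) - 2 * π * lam * r ^ 3 / (3 * d₁)) *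
          (r / d₁) * (2 * π * lam * r)) +
      (∫ r in Set.Ioi d₁, 2 * π * lam * r * Real.exp (-(π * lam * r ^ 2))) = 1 := by
  have hfar : ∫ r in Ioi d₁, 2 * π * lam * r * exp (-(π * lam * r ^ 2))
      = exp (-(π * lam * d₁ ^ 2)) := by
    simpa only [mul_assoc] using integral_Ioi_mul_exp_neg_mul_sq hd₁.le (mul_pos pi_pos hlam)
  rw [integral_los_add_integral_nlos hd₁ hAL hANL haL haNL hr₁ hr₂ hy₁, integral_nlos_far hd₁.ne',
    hfar]
  ring

/-- In the 3GPP special case, the four explicit serving-distance density pieces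
`f_{R,1}^L`, `f_{R,1}^{NL}` (on `(0, y₁]` and `(y₁, d₁]`) and `f_{R,2}^{NL}`
integrate to 1. -/
theorem threeGPP_serving_distance_densities_sum_to_one
    (lam d₁ A_L A_NL α_L α_NL : ℝ)
    (hlam : 0 < lam) (hd₁ : 0 < d₁)
    (hAL : 0 < A_L) (hANL : 0 < A_NL) (haL : 0 < α_L) (haNL : 0 < α_NL)
    (hcut : A_L * d₁ ^ α_L ≤ A_NL * d₁ ^ α_NL)
    (r₁ r₂ : ℝ → ℝ) (y₁ : ℝ)
    (hr₁ : ∀ r : ℝ, r₁ r = (A_L * r ^ α_L / A_NL) ^ (1 / α_NL))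
    (hr₂ : ∀ r : ℝ, r₂ r = (A_NL * r ^ α_NL / A_L) ^ (1 / α_L))
    (hy₁ : y₁ = (A_L * d₁ ^ α_L / A_NL) ^ (1 / α_NL)) :
    (∫ r in (0:ℝ)..d₁,
        Real.exp (-(π * lam * r ^ 2) +
            2 * π * lam * (r ^ 3 / (3 * d₁) - (r₁ r) ^ 3 / (3 * d₁))) *
          (1 - r / d₁) * (2 * π * lam * r)) +
      (∫ r in (0:ℝ)..y₁,
        Real.exp (-(π * lam * (r₂ r) ^ 2) +
            2 * π * lam * ((r₂ r) ^ 3 / (3 * d₁) - r ^ 3 / (3 * d₁))) *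
          (r / d₁) * (2 * π * lam * r)) +
      (∫ r in y₁..d₁,
        Real.exp (-(π * lam * d₁ ^ 2 / 3) - 2 * π * lam * r ^ 3 / (3 * d₁)) *
          (r / d₁) * (2 * π * lam * r)) +
      (∫ r in Set.Ioi d₁, 2 * π * lam * r * Real.exp (-(π * lam * r ^ 2))) = 1 :=
  threeGPP_serving_distance_densities_sum_to_one_general lam d₁ A_L A_NL α_L α_NL hlam hd₁ hAL hANL
    haL haNL r₁ r₂ y₁ hr₁ hr₂ hy₁
end
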